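/- arXiv:2501.05469 — 6 statements merged into one kernel-verified Lean document; each statement's English description precedes it below -/
import Mathlib

section
/- Let G be a group, C₂ a cyclic group of order 2 with nontrivial element γ, and η : G → C₂ a surjective group homomorphism whose kernel A := ker η is commutative. Then the following are equivalent: (i) every g ∈ G with η(g) = γ satisfies g² = 1; (ii) there exists a group isomorphism φ : A ⋊ C₂ → G, where γ acts on A by the inversion automorphism a ↦ a⁻¹, such that φ(a,1) = a for every a ∈ A and η(φ(a,ε)) = ε for every (a,ε) ∈ A ⋊ C₂. -/
/-- The cyclic group of order 2, written multiplicatively. -/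
abbrev C₂ : Type := Multiplicative (ZMod 2)

/-- The nontrivial element of `C₂`. -/
def γ : C₂ := Multiplicative.ofAdd 1

/-- The action of `C₂` on a commutative group `A` where `γ` acts by inversion. -/
def invHom (A : Type*) [CommGroup A] : C₂ →* MulAut A where
  toFun ε := if ε = 1 then 1 else MulEquiv.inv A
  map_one' := if_pos rfl
  map_mul' x y := by
    have h : ∀ ε : C₂, ε = 1 ∨ ε = γ := by decide
    have hγ : γ ≠ (1 : C₂) := by decide
    have hγγ : γ * γ = (1 : C₂) := by decide
    have hsq : (MulEquiv.inv A) * (MulEquiv.inv A) = 1 := by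
      ext a; simp
    rcases h x with hx | hx <;> rcases h y with hy | hy <;> subst hx <;> subst hy <;>
      simp [hγ, hγγ, hsq]

/-- Let `η : G → C₂` be a surjective homomorphism with commutative
kernel `A := ker η`.  Then every `g` with `η g = γ` squares to the identity if and only
if there is an isomorphism `φ : A ⋊ C₂ ≃* G` (with `γ` acting on `A` by inversion)
such that `φ (a, 1) = a` for all `a ∈ A` and `η (φ (a, ε)) = ε` for all `(a, ε)`. -/
theorem statement0 {G : Type*} [Group G] (η : G →* C₂)
    (hsurj : Function.Surjective η)
    (hcomm : ∀ a b : η.ker, a * b = b * a) :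
    (∀ g : G, η g = γ → g ^ 2 = 1) ↔
      (letI : CommGroup ↥η.ker := { (inferInstance : Group ↥η.ker) with mul_comm := hcomm }
       ∃ φ : (↥η.ker ⋊[invHom ↥η.ker] C₂) ≃* G,
         (∀ a : η.ker, φ ⟨a, 1⟩ = (a : G)) ∧ (∀ x, η (φ x) = x.right)) := by
  letI : CommGroup ↥η.ker := { (inferInstance : Group ↥η.ker) with mul_comm := hcomm }
  have hε : ∀ ε : C₂, ε = 1 ∨ ε = γ := by decide
  have hγ1 : γ ≠ (1 : C₂) := by decide
  have hγγ : γ * γ = (1 : C₂) := by decide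
  constructor
  · intro h
    obtain ⟨g₀, hg₀⟩ := hsurj γ
    have hg₀sq : g₀ * g₀ = 1 := by
      have := h g₀ hg₀; rwa [pow_two] at this
    have hg₀inv : g₀⁻¹ = g₀ := inv_eq_of_mul_eq_one_right hg₀sq
    let f₂ : C₂ →* G :=
      { toFun := fun ε => if ε = 1 then 1 else g₀
        map_one' := if_pos rfl
        map_mul' := by
          intro x y
          rcases hε x with hx | hx <;> rcases hε y with hy | hy <;> subst hx <;> subst hy <;>
            simp [hγ1, hγγ, hg₀sq] }
    have hηf₂ : ∀ ε : C₂, η (f₂ ε) = ε := by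
      intro ε
      rcases hε ε with h1 | h1 <;> subst h1 <;> simp [f₂, hγ1, hg₀]
    have hconj : ∀ a : η.ker, g₀ * (a : G) * g₀⁻¹ = (a : G)⁻¹ := by
      intro a
      have hmem : η (g₀ * a) = γ := by
        rw [map_mul, a.2, mul_one, hg₀]
      have hsq := h _ hmem
      rw [pow_two, ← mul_assoc] at hsq
      rw [hg₀inv]
      exact eq_inv_of_mul_eq_one_left hsq
    have hcompat : ∀ ε : C₂, η.ker.subtype.comp ((invHom ↥η.ker ε).toMonoidHom) =
        (MulAut.conj (f₂ ε)).toMonoidHom.comp η.ker.subtype := by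
      intro ε
      ext a
      rcases hε ε with h1 | h1 <;> subst h1 <;>
        simp [invHom, f₂, hγ1, MulAut.conj_apply, hconj a]
    let ψ : (↥η.ker ⋊[invHom ↥η.ker] C₂) →* G :=
      SemidirectProduct.lift η.ker.subtype f₂ hcompat
    have hψ : ∀ x : (↥η.ker ⋊[invHom ↥η.ker] C₂), ψ x = (x.left : G) * f₂ x.right := fun _ => rfl
    have hbij : Function.Bijective ψ := by
      constructor
      · rw [injective_iff_map_eq_one]
        intro x hx
        rw [hψ] at hx
        have hright : x.right = 1 := by
          have := congrArg η hx
          rw [map_mul, x.left.2, one_mul, hηf₂, map_one] at this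
          exact this
        have hleft : x.left = 1 := by
          rw [hright] at hx
          simp [f₂] at hx
          exact hx
        exact SemidirectProduct.ext hleft hright
      · intro g
        have hker : g * (f₂ (η g))⁻¹ ∈ η.ker := by
          simp [MonoidHom.mem_ker, hηf₂]
        refine ⟨⟨⟨g * (f₂ (η g))⁻¹, hker⟩, η g⟩, ?_⟩
        rw [hψ]
        simp
    refine ⟨MulEquiv.ofBijective ψ hbij, fun a => ?_, fun x => ?_⟩
    · show ψ ⟨a, 1⟩ = (a : G)
      rw [hψ]; simp [f₂]
    · show η (ψ x) = x.right
      rw [hψ, map_mul, x.left.2, one_mul, hηf₂]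
  · rintro ⟨φ, hφ1, hφ2⟩ g hg
    set x := φ.symm g with hx
    have hxr : x.right = γ := by
      have := hφ2 x
      rw [hx, MulEquiv.apply_symm_apply, hg] at this
      exact this.symm
    have hxsq : x * x = 1 := by
      refine SemidirectProduct.ext ?_ ?_
      · rw [SemidirectProduct.mul_left, hxr]
        simp [invHom, hγ1]
      · rw [SemidirectProduct.mul_right, hxr, hγγ]
        rfl
    have : g * g = 1 := by
      have := congrArg φ hxsq
      rwa [map_mul, hx, MulEquiv.apply_symm_apply, map_one] at this
    rw [pow_two]; exact this
end

section
/- Let A be a commutative group, Ĝ := A ⋊ C₂ the semidirect product where γ acts on A by inversion, and π : Ĝ → C₂ the projection. Let H be a subgroup of Ĝ containing an element h₀ with π(h₀) = γ, and let K := {a ∈ A : (a,1) ∈ H}, a subgroup of A. Then there exists a group isomorphism ψ : K ⋊ C₂ → H, where γ acts on K by inversion, such that ψ(k,1) = (k,1) for all k ∈ K and π(ψ(k,ε)) = ε for all (k,ε) ∈ K ⋊ C₂. -/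
lemma invHom_apply_one_elem {A : Type*} [CommGroup A] (a : A) : invHom A 1 a = a := rfl

lemma invHom_apply_γ_elem {A : Type*} [CommGroup A] (a : A) : invHom A γ a = a⁻¹ := by
  have h : (γ : C₂) ≠ 1 := by decide
  simp [invHom, h]

/-- Let `A` be commutative, `Ĝ = A ⋊ C₂` with `γ` acting by inversion,
`H ≤ Ĝ` a subgroup containing an element `h₀` with `π h₀ = γ`, and
`K := {a ∈ A : (a,1) ∈ H}`.  Then there is an isomorphism `ψ : K ⋊ C₂ ≃* H`
(with `γ` acting on `K` by inversion) with `ψ (k,1) = (k,1)` and `π (ψ (k,ε)) = ε`. -/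
theorem statement1 {A : Type*} [CommGroup A]
    (H : Subgroup (A ⋊[invHom A] C₂))
    (h₀ : A ⋊[invHom A] C₂) (h₀mem : h₀ ∈ H) (h₀odd : h₀.right = γ)
    (K : Subgroup A) (hK : ∀ a : A, a ∈ K ↔ (⟨a, 1⟩ : A ⋊[invHom A] C₂) ∈ H) :
    ∃ ψ : (↥K ⋊[invHom ↥K] C₂) ≃* ↥H,
      (∀ k : K, ((ψ ⟨k, 1⟩ : ↥H) : A ⋊[invHom A] C₂) = ⟨(k : A), 1⟩) ∧
      (∀ x : ↥K ⋊[invHom ↥K] C₂,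
        ((ψ x : ↥H) : A ⋊[invHom A] C₂).right = x.right) := by
  classical
  have hcases : ∀ ε : C₂, ε = 1 ∨ ε = γ := by decide
  have hγne : (γ : C₂) ≠ 1 := by decide
  have hγγ : γ * γ = (1 : C₂) := by decide
  have h₀eq : h₀ = ⟨h₀.left, γ⟩ := SemidirectProduct.ext rfl h₀odd
  let f : (↥K ⋊[invHom ↥K] C₂) →* (A ⋊[invHom A] C₂) :=
  { toFun := fun x => ⟨(x.left : A), 1⟩ * (if x.right = 1 then 1 else h₀)
    map_one' := by simp
    map_mul' := by
      intro x y
      rcases hcases x.right with hx | hx <;> rcases hcases y.right with hy | hy <;>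
        · rw [h₀eq]
          ext <;>
            · try simp [hx, hy, hγne, hγγ, invHom_apply_one_elem, invHom_apply_γ_elem,
                mul_comm, mul_left_comm, mul_assoc] }
  have hfright : ∀ x : ↥K ⋊[invHom ↥K] C₂, (f x).right = x.right := by
    intro x
    rcases hcases x.right with hx | hx <;>
      simp [f, hx, hγne, h₀odd]
  have hfleft : ∀ x : ↥K ⋊[invHom ↥K] C₂,
      (f x).left = (x.left : A) * (if x.right = 1 then 1 else h₀.left) := by
    intro x
    rcases hcases x.right with hx | hx <;>
      simp [f, hx, hγne, invHom_apply_one_elem]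
  have hfleft1 : ∀ k : K, f ⟨k, 1⟩ = ⟨(k : A), 1⟩ := by
    intro k; simp [f]
  have hfmem : ∀ x, f x ∈ H := by
    intro x
    rcases hcases x.right with hx | hx
    · simpa [f, hx] using (hK x.left).mp x.left.2
    · have : (⟨(x.left : A), 1⟩ : A ⋊[invHom A] C₂) ∈ H := (hK x.left).mp x.left.2
      simpa [f, hx, hγne] using H.mul_mem this h₀mem
  let F : (↥K ⋊[invHom ↥K] C₂) →* ↥H := f.codRestrict H hfmem
  have hinj : Function.Injective F := by
    intro x y hxy
    have hfeq : f x = f y := congrArg Subtype.val hxy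
    have hr : x.right = y.right := by
      rw [← hfright x, ← hfright y, hfeq]
    have hl : x.left = y.left := by
      have h1 := congrArg SemidirectProduct.left hfeq
      rw [hfleft x, hfleft y, hr] at h1
      exact Subtype.ext (mul_right_cancel h1)
    exact SemidirectProduct.ext hl hr
  have hsurj : Function.Surjective F := by
    rintro ⟨h, hmem⟩
    rcases hcases h.right with hh | hh
    · have heq : h = ⟨h.left, 1⟩ := SemidirectProduct.ext rfl hh
      have hkmem : h.left ∈ K := (hK h.left).mpr (heq ▸ hmem)
      refine ⟨⟨⟨h.left, hkmem⟩, 1⟩, ?_⟩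
      apply Subtype.ext
      show f _ = h
      rw [hfleft1, ← heq]
    · have hmul : h * h₀⁻¹ ∈ H := H.mul_mem hmem (H.inv_mem h₀mem)
      have hγinv : (γ : C₂)⁻¹ = γ := by decide
      have hr1 : (h * h₀⁻¹).right = 1 := by
        simp [hh, h₀odd, hγinv, hγγ]
      have hpre : h * h₀⁻¹ = ⟨(h * h₀⁻¹).left, 1⟩ := SemidirectProduct.ext rfl hr1
      have hkmem : (h * h₀⁻¹).left ∈ K := (hK _).mpr (hpre ▸ hmul)
      refine ⟨⟨⟨(h * h₀⁻¹).left, hkmem⟩, γ⟩, ?_⟩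
      apply Subtype.ext
      show (⟨(h * h₀⁻¹).left, 1⟩ : A ⋊[invHom A] C₂) * (if γ = (1:C₂) then 1 else h₀) = h
      rw [if_neg hγne, ← hpre]
      group
  refine ⟨MulEquiv.ofBijective F ⟨hinj, hsurj⟩, ?_, ?_⟩
  · intro k
    show (F ⟨k, 1⟩ : A ⋊[invHom A] C₂) = _
    exact hfleft1 k
  · intro x
    show (F x : A ⋊[invHom A] C₂).right = x.right
    exact hfright x
end

section
/- Let G be a commutative group, Ĝ := G ⋊ C₂ with γ acting by inversion, and 𝕋̂ := Circle ⋊ C₂ with γ acting by inversion. For every group homomorphism α : G → Circle, the map f_α : Ĝ → 𝕋̂ given by f_α(a,ε) := (α(a), ε) is a group homomorphism over C₂, and its restriction to G ⊆ Ĝ is α, i.e. f_α(a,1) = (α(a),1) for all a ∈ G. Moreover, for homomorphisms α, β : G → Circle, the pointwise product x ↦ ((f_α)₁(x)·(f_β)₁(x), π(x)) equals f_{α·β}. In particular, the restriction map ψ, sending a Real character f of Ĝ to the character a ↦ f₁(a,1) of G, is surjective and admits a multiplicative section α ↦ f_α. -/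
lemma invHom_comm {G : Type*} [CommGroup G] (α : G →* Circle) (ε : C₂) (b : G) :
    α (invHom G ε b) = invHom Circle ε (α b) := by
  by_cases h : ε = 1 <;> simp [invHom, h]

/-- `f_α`. -/
noncomputable def Fmap {G : Type*} [CommGroup G] (α : G →* Circle) :
    (G ⋊[invHom G] C₂) →* (Circle ⋊[invHom Circle] C₂) where
  toFun x := ⟨α x.left, x.right⟩
  map_one' := by
    simp [SemidirectProduct.one_left, SemidirectProduct.one_right]
  map_mul' x y := by
    ext <;>
      simp [SemidirectProduct.mul_left, SemidirectProduct.mul_right, invHom_comm]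

/-- For every character `α : G → Circle` the map
`f_α (a, ε) = (α a, ε)` is a group homomorphism `Ĝ → 𝕋̂` over `C₂` restricting to `α`
on `G`; the assignment `α ↦ f_α` is multiplicative for the pointwise product of Real
characters; in particular the restriction map `ψ` on Real characters is surjective. -/
theorem statement4 {G : Type*} [CommGroup G] :
    ∃ F : (G →* Circle) → ((G ⋊[invHom G] C₂) →* (Circle ⋊[invHom Circle] C₂)),
      -- the formula defining `f_α`
      (∀ (α : G →* Circle) (a : G) (ε : C₂), F α ⟨a, ε⟩ = ⟨α a, ε⟩) ∧
      -- `f_α` is a homomorphism over `C₂`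
      (∀ (α : G →* Circle) (x : G ⋊[invHom G] C₂), (F α x).right = x.right) ∧
      -- the restriction of `f_α` to `G ⊆ Ĝ` is `α`
      (∀ (α : G →* Circle) (a : G), (F α ⟨a, 1⟩).left = α a) ∧
      -- `α ↦ f_α` sends products to pointwise products
      (∀ (α β : G →* Circle) (x : G ⋊[invHom G] C₂),
        F (α * β) x = ⟨(F α x).left * (F β x).left, x.right⟩) ∧
      -- consequently the restriction map `ψ` on Real characters is surjective
      (∀ α : G →* Circle,
        ∃ f : (G ⋊[invHom G] C₂) →* (Circle ⋊[invHom Circle] C₂),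
          (∀ x : G ⋊[invHom G] C₂, (f x).right = x.right) ∧
          (∀ a : G, (f ⟨a, 1⟩).left = α a)) := by
  refine ⟨Fmap, fun α a ε => rfl, fun α x => rfl, fun α a => rfl,
    fun α β x => rfl, fun α => ⟨Fmap α, fun x => rfl, fun a => rfl⟩⟩
end

section
/- Let G be a commutative group, Ĝ := G ⋊ C₂ with γ acting by inversion, and 𝕋̂ := Circle ⋊ C₂ with γ acting by inversion. Let f, h : Ĝ → 𝕋̂ be group homomorphisms over C₂ with equal restriction to G, i.e. f₁(a,1) = h₁(a,1) for all a ∈ G. Then the associated Real representations of Ĝ on ℂ are isomorphic: there exists c ∈ ℂ with |c| = 1 such that for all x ∈ Ĝ and all z ∈ ℂ, ρ_h(x)(c·z) = c·ρ_f(x)(z). -/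
/-- The Real representation of `Ĝ` on `ℂ` associated to a Real character
`f : Ĝ → 𝕋̂`: the element `x` acts by `z ↦ f₁(x)·z` if `π x = 1` and by
`z ↦ f₁(x)·conj z` if `π x = γ`. -/
noncomputable def rho {G : Type*} [CommGroup G]
    (f : (G ⋊[invHom G] C₂) →* (Circle ⋊[invHom Circle] C₂))
    (x : G ⋊[invHom G] C₂) (z : ℂ) : ℂ :=
  if x.right = 1 then ((f x).left : ℂ) * z
  else ((f x).left : ℂ) * (starRingEnd ℂ) z

/-- If two Real characters `f, h` of `Ĝ = G ⋊ C₂` have equal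
restriction to `G`, then the associated Real representations of `Ĝ` on `ℂ` are
isomorphic: there is a unit complex number `c` intertwining them. -/
theorem statement6 {G : Type*} [CommGroup G]
    (f h : (G ⋊[invHom G] C₂) →* (Circle ⋊[invHom Circle] C₂))
    (hf : ∀ x : G ⋊[invHom G] C₂, (f x).right = x.right)
    (hh : ∀ x : G ⋊[invHom G] C₂, (h x).right = x.right)
    (hres : ∀ a : G, (f ⟨a, 1⟩).left = (h ⟨a, 1⟩).left) :
    ∃ c : ℂ, ‖c‖ = 1 ∧
      ∀ (x : G ⋊[invHom G] C₂) (z : ℂ), rho h x (c * z) = c * rho f x z := by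
  set u : Circle := (f ⟨1, γ⟩).left with hu
  set v : Circle := (h ⟨1, γ⟩).left with hv
  set d : ℂ := (v : ℂ) / (u : ℂ) with hd
  have hune : (u : ℂ) ≠ 0 := Circle.coe_ne_zero u
  have hvne : (v : ℂ) ≠ 0 := Circle.coe_ne_zero v
  have hdne : d ≠ 0 := div_ne_zero hvne hune
  have habsd : ‖d‖ = 1 := by
    simp [hd, map_div₀, Circle.norm_coe]
  set c : ℂ := Complex.exp (Complex.log d / 2) with hc
  have habsc : ‖c‖ = 1 := by
    rw [hc, Complex.norm_exp]
    have : (Complex.log d / 2).re = Real.log ‖d‖ / 2 := by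
      simp [Complex.div_re, Complex.log_re]
    rw [this, habsd, Real.log_one]
    simp
  have hc2 : c * c = d := by
    rw [hc, ← Complex.exp_add]
    ring_nf
    exact Complex.exp_log hdne
  have hcconj : (starRingEnd ℂ) c = c⁻¹ := by
    rw [Complex.inv_def, Complex.normSq_eq_norm_sq, habsc]
    simp
  refine ⟨c, habsc, ?_⟩
  intro x z
  have hc2' : ∀ e : C₂, e = 1 ∨ e = γ := by decide
  have hγne : γ ≠ (1 : C₂) := by decide
  rcases hc2' x.right with hx | hx
  · -- trivial case
    have hxeq : x = (⟨x.left, 1⟩ : G ⋊[invHom G] C₂) := by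
      cases x; simp_all
    rw [rho, rho, hx, if_pos rfl, if_pos rfl, hxeq, hres]
    ring
  · have hxeq : x = (⟨x.left, 1⟩ : G ⋊[invHom G] C₂) * ⟨1, γ⟩ := by
      cases x
      ext <;> simp_all [SemidirectProduct.mul_left, SemidirectProduct.mul_right]
    have hfl : ((f x).left : ℂ) = ((f ⟨x.left, 1⟩).left : ℂ) * (u : ℂ) := by
      conv_lhs => rw [hxeq, map_mul]
      rw [SemidirectProduct.mul_left]
      have h1 : (f (⟨x.left, 1⟩ : G ⋊[invHom G] C₂)).right = 1 := by rw [hf]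
      rw [h1]
      simp
      rw [hu]; rfl
    have hhl : ((h x).left : ℂ) = ((f ⟨x.left, 1⟩).left : ℂ) * (v : ℂ) := by
      conv_lhs => rw [hxeq, map_mul]
      rw [SemidirectProduct.mul_left]
      have h1 : (h (⟨x.left, 1⟩ : G ⋊[invHom G] C₂)).right = 1 := by rw [hh]
      rw [h1, ← hres]
      simp
      rw [hv]; rfl
    rw [rho, rho, hx, if_neg hγne, if_neg hγne, map_mul, hfl, hhl, hcconj]
    have hcne : c ≠ 0 := by
      intro h0; rw [h0] at habsc; simp at habsc
    have key : (v : ℂ) * c⁻¹ = c * (u : ℂ) := by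
      have h2 : (v:ℂ) = c * c * (u:ℂ) := by rw [hc2, hd]; field_simp
      rw [h2]; field_simp
    calc ((f ⟨x.left, 1⟩).left : ℂ) * (v:ℂ) * (c⁻¹ * (starRingEnd ℂ) z)
        = ((v:ℂ) * c⁻¹) * (((f ⟨x.left, 1⟩).left : ℂ) * (starRingEnd ℂ) z) := by ring
      _ = (c * (u:ℂ)) * (((f ⟨x.left, 1⟩).left : ℂ) * (starRingEnd ℂ) z) := by rw [key]
      _ = c * (((f ⟨x.left, 1⟩).left : ℂ) * (u:ℂ) * (starRingEnd ℂ) z) := by ring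
end

section
/- Let G be a commutative group, Ĝ := G ⋊ C₂ with γ acting by inversion, and 𝕋̂ := Circle ⋊ C₂ with γ acting by inversion. Let f, h : Ĝ → 𝕋̂ be group homomorphisms over C₂. Then f₁(a,1) = h₁(a,1) for all a ∈ G if and only if there exists c ∈ ℂ with |c| = 1 such that for all x ∈ Ĝ and all z ∈ ℂ, ρ_h(x)(c·z) = c·ρ_f(x)(z). Consequently, restriction to G induces a bijection between Real characters of Ĝ up to isomorphism of the associated Real representations and homomorphisms G → Circle. -/
set_option maxRecDepth 4000


-- auxiliary lemmas

lemma sqrt_circle (w : ℂ) (hw : ‖w‖ = 1) :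
    ∃ c : ℂ, ‖c‖ = 1 ∧ c * c = w := by
  refine ⟨Complex.exp (w.arg / 2 * Complex.I), ?_, ?_⟩
  · simp [Complex.norm_exp]
  · rw [← Complex.exp_add]
    have : ((w.arg : ℂ) / 2 * Complex.I + (w.arg : ℂ) / 2 * Complex.I)
        = (w.arg : ℂ) * Complex.I := by ring
    rw [this]
    have h2 := Complex.norm_mul_exp_arg_mul_I w
    rw [hw] at h2
    simpa using h2

lemma left_mul_of_right_one {A : Type*} [CommGroup A] (p q : A ⋊[invHom A] C₂)
    (hp : p.right = 1) : (p * q).left = p.left * q.left := by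
  rw [SemidirectProduct.mul_left, hp, map_one]; rfl

/-- Two Real characters `f, h` of `Ĝ = G ⋊ C₂` have equal restriction
to `G` if and only if their associated Real representations on `ℂ` are isomorphic via a
unit complex number.  Consequently (together with surjectivity of restriction),
restriction to `G` induces a bijection between Real characters of `Ĝ` up to isomorphism
of the associated Real representations and characters `G → Circle`. -/
theorem statement7 {G : Type*} [CommGroup G] :
    (∀ f h : (G ⋊[invHom G] C₂) →* (Circle ⋊[invHom Circle] C₂),
      (∀ x : G ⋊[invHom G] C₂, (f x).right = x.right) →
      (∀ x : G ⋊[invHom G] C₂, (h x).right = x.right) →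
      ((∀ a : G, (f ⟨a, 1⟩).left = (h ⟨a, 1⟩).left) ↔
        ∃ c : ℂ, ‖c‖ = 1 ∧
          ∀ (x : G ⋊[invHom G] C₂) (z : ℂ), rho h x (c * z) = c * rho f x z)) ∧
    -- surjectivity of restriction: every character of `G` lifts to a Real character,
    -- so that restriction induces a bijection on isomorphism classes
    (∀ α : G →* Circle,
      ∃ f : (G ⋊[invHom G] C₂) →* (Circle ⋊[invHom Circle] C₂),
        (∀ x : G ⋊[invHom G] C₂, (f x).right = x.right) ∧
        (∀ a : G, (f ⟨a, 1⟩).left = α a)) := by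
  constructor
  · intro f h hf hh
    constructor
    · intro hfh
      set u : ℂ := ((f (SemidirectProduct.inr γ)).left : ℂ) with hu
      set v : ℂ := ((h (SemidirectProduct.inr γ)).left : ℂ) with hv
      have hau : ‖u‖ = 1 := Circle.norm_coe _
      have hav : ‖v‖ = 1 := Circle.norm_coe _
      have hu0 : u ≠ 0 := by intro h0; rw [h0] at hau; simp at hau
      obtain ⟨c, hc, hc2⟩ := sqrt_circle (v / u) (by rw [norm_div, hau, hav]; norm_num)
      have hc2' : c * c * u = v := by rw [eq_div_iff hu0] at hc2; exact hc2
      have hcc : c * (starRingEnd ℂ) c = 1 := by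
        rw [Complex.mul_conj, Complex.normSq_eq_norm_sq, hc]
        norm_num
      refine ⟨c, hc, ?_⟩
      intro x z
      have hcase : x.right = 1 ∨ x.right = γ := by
        have : ∀ ε : C₂, ε = 1 ∨ ε = γ := by decide
        exact this x.right
      have hγ1 : γ ≠ (1 : C₂) := by decide
      rcases hcase with hx | hx
      · have hx1 : x = ⟨x.left, 1⟩ := by ext <;> simp [hx]
        have key : ((f x).left : ℂ) = ((h x).left : ℂ) := by
          rw [hx1, hfh x.left]
        simp only [rho, if_pos hx]
        rw [key]; ring
      · -- decompose x = inl x.left * inr γ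
        have hx1 : x = SemidirectProduct.inl x.left * SemidirectProduct.inr γ := by
          ext <;> simp [hx]
        have hfl : (f x).left = (f (SemidirectProduct.inl x.left)).left
            * (f (SemidirectProduct.inr γ)).left := by
          conv_lhs => rw [hx1, map_mul]
          exact left_mul_of_right_one (f (SemidirectProduct.inl x.left))
            (f (SemidirectProduct.inr γ)) (by rw [hf, SemidirectProduct.right_inl])
        have hhl : (h x).left = (h (SemidirectProduct.inl x.left)).left
            * (h (SemidirectProduct.inr γ)).left := by
          conv_lhs => rw [hx1, map_mul]
          exact left_mul_of_right_one (h (SemidirectProduct.inl x.left))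
            (h (SemidirectProduct.inr γ)) (by rw [hh, SemidirectProduct.right_inl])
        have hpe : ((f (SemidirectProduct.inl x.left)).left : ℂ)
            = ((h (SemidirectProduct.inl x.left)).left : ℂ) := by
          have : (SemidirectProduct.inl x.left : G ⋊[invHom G] C₂)
              = ⟨x.left, 1⟩ := rfl
          rw [this, hfh x.left]
        simp only [rho, if_neg (hx ▸ hγ1)]
        rw [hfl, hhl, map_mul (starRingEnd ℂ) c z]
        push_cast
        rw [← hu, ← hv, ← hpe]
        set p : ℂ := ((f (SemidirectProduct.inl x.left)).left : ℂ)
        have key : v * (starRingEnd ℂ) c = c * u := by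
          calc v * (starRingEnd ℂ) c = c * c * u * (starRingEnd ℂ) c := by rw [hc2']
            _ = c * u * (c * (starRingEnd ℂ) c) := by ring
            _ = c * u := by rw [hcc, mul_one]
        linear_combination (p * (starRingEnd ℂ) z) * key
    · rintro ⟨c, hc, hcom⟩ a
      have hc0 : c ≠ 0 := by intro h0; rw [h0] at hc; simp at hc
      have := hcom ⟨a, 1⟩ 1
      have h1 : (⟨a, 1⟩ : G ⋊[invHom G] C₂).right = 1 := rfl
      simp only [rho, if_pos h1] at this
      rw [if_pos trivial, if_pos trivial, mul_one] at this
      have h2 : ((h ⟨a, 1⟩).left : ℂ) * c = ((f ⟨a, 1⟩).left : ℂ) * c := by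
        rw [this]; ring
      exact Circle.coe_injective (mul_right_cancel₀ hc0 h2).symm
  · intro α
    have hdec : ∀ ε : C₂, ε = 1 ∨ ε = γ := by decide
    have hγ1 : γ ≠ (1 : C₂) := by decide
    have hcompat : ∀ g : C₂,
        ((SemidirectProduct.inl : Circle →* Circle ⋊[invHom Circle] C₂).comp α).comp
          ((invHom G) g).toMonoidHom
        = (MulAut.conj ((SemidirectProduct.inr : C₂ →* Circle ⋊[invHom Circle] C₂) g)).toMonoidHom.comp
          ((SemidirectProduct.inl : Circle →* Circle ⋊[invHom Circle] C₂).comp α) := by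
      intro g
      refine DFunLike.ext _ _ fun n => ?_
      simp only [MonoidHom.coe_comp, Function.comp_apply, MulEquiv.coe_toMonoidHom,
        MulAut.conj_apply]
      rw [← map_inv (SemidirectProduct.inr : C₂ →* Circle ⋊[invHom Circle] C₂) g,
        ← SemidirectProduct.inl_aut]
      congr 1
      rcases hdec g with hg | hg <;> subst hg <;> simp [invHom, hγ1]
    refine ⟨SemidirectProduct.lift
        ((SemidirectProduct.inl : Circle →* Circle ⋊[invHom Circle] C₂).comp α)
        SemidirectProduct.inr hcompat, ?_, ?_⟩
    · intro x
      conv_lhs => rw [← SemidirectProduct.inl_left_mul_inr_right x]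
      rw [map_mul, SemidirectProduct.lift_inl, SemidirectProduct.lift_inr]
      simp
    · intro a
      have h1 : (⟨a, 1⟩ : G ⋊[invHom G] C₂) = SemidirectProduct.inl a := rfl
      rw [h1, SemidirectProduct.lift_inl]
      rfl
end

section
/- Let G be a commutative group, Ĝ := G ⋊ C₂ with γ acting by inversion, 𝕋̂ := Circle ⋊ C₂ with γ acting by inversion, and let f : Ĝ → 𝕋̂ be a group homomorphism over C₂. Let Ĥ be a subgroup of Ĝ such that f₁(x) = 1 for every x ∈ Ĥ with π(x) = 1. Then there exists a nonzero z ∈ ℂ with ρ_f(x)(z) = z for all x ∈ Ĥ, i.e. the Real representation associated to f has nonzero Ĥ-fixed points. -/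
/-- Let `f : Ĝ → 𝕋̂` be a Real character of `Ĝ = G ⋊ C₂` and `Ĥ ≤ Ĝ`
a subgroup such that `f₁ x = 1` for every even `x ∈ Ĥ` (i.e. with `π x = 1`).  Then
the Real representation of `Ĝ` on `ℂ` associated to `f` has a nonzero `Ĥ`-fixed
vector. -/
theorem statement12 {G : Type*} [CommGroup G]
    (f : (G ⋊[invHom G] C₂) →* (Circle ⋊[invHom Circle] C₂))
    (hf : ∀ x : G ⋊[invHom G] C₂, (f x).right = x.right)
    (H : Subgroup (G ⋊[invHom G] C₂))
    (hH : ∀ x ∈ H, x.right = 1 → (f x).left = 1) :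
    ∃ z : ℂ, z ≠ 0 ∧ ∀ x ∈ H, rho f x z = z := by

  by_cases hodd : ∃ x₀ ∈ H, x₀.right ≠ 1
  · obtain ⟨x₀, hx₀H, hx₀⟩ := hodd
    set u : ℂ := ((f x₀).left : ℂ) with hu
    have hu1 : ‖u‖ = 1 := Circle.norm_coe (f x₀).left
    obtain ⟨w, hw⟩ : ∃ w : ℂ, w ^ 2 = u := IsAlgClosed.exists_pow_nat_eq u (by norm_num : (0:ℕ) < 2)
    have hwabs : ‖w‖ = 1 := by
      have : ‖w‖ ^ 2 = 1 := by rw [← norm_pow, hw, hu1]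
      nlinarith [norm_nonneg w]
    have hwne : w ≠ 0 := by
      intro h; rw [h] at hwabs; simp at hwabs
    refine ⟨w, hwne, ?_⟩
    intro x hx
    by_cases hxr : x.right = 1
    · simp [rho, hxr, hH x hx hxr]
    · have hleft : ((f x).left : ℂ) = u := by
        have hmem : x * x₀⁻¹ ∈ H := mul_mem hx (inv_mem hx₀H)
        have hright : (x * x₀⁻¹).right = 1 := by
          have hC : ∀ ε : C₂, ε = 1 ∨ ε = γ := by decide
          have hx1 : x.right = γ := (hC x.right).resolve_left hxr
          have hx2 : x₀.right = γ := (hC x₀.right).resolve_left hx₀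
          have : (x * x₀⁻¹).right = x.right * x₀.right⁻¹ := by
            simp [SemidirectProduct.right]
          rw [this, hx1, hx2]; decide
        have h1 : (f (x * x₀⁻¹)).left = 1 := hH _ hmem hright
        have h2 : (f (x * x₀⁻¹)).right = 1 := by rw [hf]; exact hright
        have hdecomp : f x = f (x * x₀⁻¹) * f x₀ := by
          rw [← map_mul]; group
        have : (f x).left = (f (x * x₀⁻¹)).left *
            (invHom Circle) (f (x * x₀⁻¹)).right (f x₀).left := by
          rw [hdecomp]; rfl
        rw [h1, h2, map_one] at this
        simp at this
        rw [this]
      rw [rho, if_neg hxr, hleft, ← hw]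
      have hconj : w * (starRingEnd ℂ) w = 1 := by
        rw [Complex.mul_conj]
        norm_cast
        rw [Complex.normSq_eq_norm_sq, hwabs]; norm_num
      calc w ^ 2 * (starRingEnd ℂ) w = w * (w * (starRingEnd ℂ) w) := by ring
        _ = w := by rw [hconj, mul_one]
  · push_neg at hodd
    refine ⟨1, one_ne_zero, ?_⟩
    intro x hx
    simp [rho, hodd x hx, hH x hx (hodd x hx)]
end
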